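/- In W(F₄) (2-adic Witt vectors of F₄), let ζ be a Teichmüller lift of a primitive cube root of unity and let √(-7) denote the square root of -7 congruent to 1 mod 4. Then the elements π = 1 + 2ζ and α = (1 - 2ζ)/√(-7) satisfy |π| = 3 and |α| = -1, where |x+yT| = x·σ(x) + 2·y·σ(y) as above. In particular the determinant map to Z₂ˣ is surjective when restricted to the subgroup generated by π, α, and units of determinant 1. -/

import Mathlib

noncomputable section

/-- The field `F₄` with four elements. -/
abbrev F4 := GaloisField 2 2

/-- The ring of Witt vectors `W(F₄)`. -/
abbrev W4 := WittVector 2 F4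

/-- The Frobenius lift `σ` on `W(F₄)` (lifting `x ↦ x²`). -/
def σW : W4 →+* W4 := WittVector.frobenius

theorem frob_frob (a : F4) : frobenius F4 2 (frobenius F4 2 a) = a := by
  haveI : Fintype F4 := Fintype.ofFinite F4
  have hcard : Fintype.card F4 = 4 := by
    have := GaloisField.card 2 2 (by norm_num)
    simpa using this
  simp only [frobenius_def]
  rw [← pow_mul]
  calc a ^ (2 * 2) = a ^ Fintype.card F4 := by rw [hcard]
    _ = a := FiniteField.pow_card a

/-- On `W(F₄)` the Frobenius lift is an involution. -/
theorem σW_σW (x : W4) : σW (σW x) = x := by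
  have h : σW = WittVector.map (frobenius F4 2) :=
    WittVector.frobenius_eq_map_frobenius 2
  rw [h]
  ext n
  simp [WittVector.map_coeff, frob_frob]

/-- The ring `End = W(F₄)⟨T⟩/(T² + 2, ζT − Tζ²)`, realized concretely: the pair
`(x, y)` represents `x + y·T`, and multiplication is twisted by the Frobenius lift `σ`:
`(x + yT)·(x' + y'T) = (x x' − 2 y σ(y')) + (x y' + y σ(x'))·T`. -/
def EndF4 : Type := W4 × W4

instance : Zero EndF4 := ⟨((0 : W4), (0 : W4))⟩
instance : One EndF4 := ⟨((1 : W4), (0 : W4))⟩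
instance : Add EndF4 := ⟨fun a b => (a.1 + b.1, a.2 + b.2)⟩
instance : Neg EndF4 := ⟨fun a => (-a.1, -a.2)⟩
instance : Mul EndF4 :=
  ⟨fun a b => (a.1 * b.1 - 2 * (a.2 * σW b.2), a.1 * b.2 + a.2 * σW b.1)⟩

theorem EndF4.add_def (a b : EndF4) : a + b = (a.1 + b.1, a.2 + b.2) := rfl
theorem EndF4.mul_def (a b : EndF4) :
    a * b = (a.1 * b.1 - 2 * (a.2 * σW b.2), a.1 * b.2 + a.2 * σW b.1) := rfl
theorem EndF4.neg_def (a : EndF4) : -a = (-a.1, -a.2) := rfl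
theorem EndF4.zero_def : (0 : EndF4) = ((0 : W4), (0 : W4)) := rfl
theorem EndF4.one_def : (1 : EndF4) = ((1 : W4), (0 : W4)) := rfl

set_option maxHeartbeats 1000000 in
instance : Ring EndF4 :=
  Ring.ofMinimalAxioms
    (fun a b c => by
      exact Prod.ext (show (a.1 + b.1) + c.1 = a.1 + (b.1 + c.1) by ring)
        (show (a.2 + b.2) + c.2 = a.2 + (b.2 + c.2) by ring))
    (fun a => by
      exact Prod.ext (show (0 : W4) + a.1 = a.1 by simp) (show (0 : W4) + a.2 = a.2 by simp))
    (fun a => by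
      exact Prod.ext (show -a.1 + a.1 = 0 by simp) (show -a.2 + a.2 = 0 by simp))
    (fun a b c => by
      exact Prod.ext
        (show (a.1 * b.1 - 2 * (a.2 * σW b.2)) * c.1
            - 2 * ((a.1 * b.2 + a.2 * σW b.1) * σW c.2)
          = a.1 * (b.1 * c.1 - 2 * (b.2 * σW c.2))
            - 2 * (a.2 * σW (b.1 * c.2 + b.2 * σW c.1)) by
          simp only [map_add, map_mul, map_sub, map_ofNat, σW_σW]; ring)
        (show (a.1 * b.1 - 2 * (a.2 * σW b.2)) * c.2
            + (a.1 * b.2 + a.2 * σW b.1) * σW c.1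
          = a.1 * (b.1 * c.2 + b.2 * σW c.1)
            + a.2 * σW (b.1 * c.1 - 2 * (b.2 * σW c.2)) by
          simp only [map_add, map_mul, map_sub, map_ofNat, σW_σW]; ring))
    (fun a => by
      exact Prod.ext (show 1 * a.1 - 2 * (0 * σW a.2) = a.1 by simp)
        (show 1 * a.2 + 0 * σW a.1 = a.2 by simp))
    (fun a => by
      exact Prod.ext (show a.1 * 1 - 2 * (a.2 * σW 0) = a.1 by simp)
        (show a.1 * 0 + a.2 * σW 1 = a.2 by simp))
    (fun a b c => by
      exact Prod.ext
        (show a.1 * (b.1 + c.1) - 2 * (a.2 * σW (b.2 + c.2))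
          = (a.1 * b.1 - 2 * (a.2 * σW b.2)) + (a.1 * c.1 - 2 * (a.2 * σW c.2)) by
          simp only [map_add]; ring)
        (show a.1 * (b.2 + c.2) + a.2 * σW (b.1 + c.1)
          = (a.1 * b.2 + a.2 * σW b.1) + (a.1 * c.2 + a.2 * σW c.1) by
          simp only [map_add]; ring))
    (fun a b c => by
      exact Prod.ext
        (show (a.1 + b.1) * c.1 - 2 * ((a.2 + b.2) * σW c.2)
          = (a.1 * c.1 - 2 * (a.2 * σW c.2)) + (b.1 * c.1 - 2 * (b.2 * σW c.2)) by ring)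
        (show (a.1 + b.1) * c.2 + (a.2 + b.2) * σW c.1
          = (a.1 * c.2 + a.2 * σW c.1) + (b.1 * c.2 + b.2 * σW c.1) by ring))

/-- The element `T` of `End`. -/
def Tel : EndF4 := ((0 : W4), (1 : W4))

/-- The canonical inclusion `W(F₄) → End`. -/
def ιW : W4 → EndF4 := fun a => (a, (0 : W4))

/-- The determinant `|x + yT| = x·σ(x) + 2·y·σ(y)`. -/
def detW : EndF4 → W4 := fun a => a.1 * σW a.1 + 2 * (a.2 * σW a.2)

/-! Since `σ` fixes `s` and sends `ζ` to `ζ²`, both determinants are norms `a·σ(a)` computed with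
`ζ² + ζ + 1 = 0`: `(1 + 2ζ)(1 + 2ζ²) = 3` and `(1 - 2ζ)(1 - 2ζ²) = 7 = -s²`. For the density,
it suffices that `3` and `-1` generate every `(ℤ/2ⁿ)ˣ`, because `-3 = 1 + 4·(-1)` has order
`2ⁿ⁻²` there while `-1 ∉ ⟨-3⟩`. -/

open WittVector PadicInt Filter

theorem WittVector.frobenius_teichmuller {p : ℕ} [Fact p.Prime] {R : Type*} [CommRing R]
    [CharP R p] (r : R) : frobenius (teichmuller p r) = teichmuller p r ^ p := by
  rw [frobenius_eq_map_frobenius, map_teichmuller, frobenius_def, map_pow]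

theorem WittVector.frobenius_map_zmod {p : ℕ} [Fact p.Prime] {R : Type*} [CommRing R]
    [CharP R p] (f : ZMod p →+* R) (x : WittVector p (ZMod p)) :
    frobenius (map f x) = map f x := by
  ext n
  simp only [frobenius_eq_map_frobenius, map_coeff]
  exact congrArg (· (x.coeff n)) (RingHom.ext_zmod ((_root_.frobenius R p).comp f) f)

theorem IsPrimitiveRoot.teichmuller {p : ℕ} [Fact p.Prime] {R : Type*} [CommRing R]
    {z : R} {k : ℕ} (h : IsPrimitiveRoot z k) : IsPrimitiveRoot (teichmuller p z) k :=
  h.map_of_injective fun a b hab => by simpa using congrArg (·.coeff 0) hab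

theorem isPrimitiveRoot_three_of_sq_add_add_one {R : Type*} [CommRing R] (h3 : (3 : R) ≠ 0)
    {z : R} (hz : z ^ 2 + z + 1 = 0) : IsPrimitiveRoot z 3 := by
  refine IsPrimitiveRoot.iff_orderOf.2 (orderOf_eq_prime (by linear_combination (z - 1) * hz) ?_)
  rintro rfl
  exact h3 (by linear_combination hz)

theorem ZMod.card_units_two_pow_add_one (n : ℕ) : Nat.card (ZMod (2 ^ (n + 1)))ˣ = 2 ^ n := by
  rw [Nat.card_eq_fintype_card, ZMod.card_units_eq_totient,
    Nat.totient_prime_pow Nat.prime_two n.succ_pos]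
  simp

/- `⟨g⟩` has order `2^n`, half the group, and lies in the kernel of reduction mod `4`, which
misses `-1`. -/
theorem ZMod.subgroup_eq_top_of_neg_one_mem_of_one_add_four_mul_mem (n : ℕ)
    {K : Subgroup (ZMod (2 ^ (n + 2)))ˣ} (hK : -1 ∈ K) {g : (ZMod (2 ^ (n + 2)))ˣ} (hgK : g ∈ K)
    {a : ℤ} (ha : Odd a) (hg : (g : ZMod (2 ^ (n + 2))) = 1 + 4 * a) : K = ⊤ := by
  have h4 : 4 ∣ 2 ^ (n + 2) := Dvd.intro_left (2 ^ n) (pow_add 2 n 2).symm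
  have hg_ker : g ∈ (ZMod.unitsMap h4).ker := by
    rw [MonoidHom.mem_ker, Units.ext_iff]
    change ZMod.castHom h4 (ZMod 4) g = 1
    rw [hg, map_add, map_one, map_mul, map_intCast, map_ofNat,
      show (4 : ZMod 4) = 0 from rfl, zero_mul, add_zero]
  have hneg_one : -1 ∉ (ZMod.unitsMap h4).ker := by
    rw [MonoidHom.mem_ker, Units.ext_iff]
    change ZMod.castHom h4 (ZMod 4) (-1) ≠ 1
    rw [map_neg, map_one]
    decide
  have hlt : Subgroup.zpowers g < K :=
    lt_of_le_of_ne (Subgroup.zpowers_le.2 hgK) fun h =>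
      hneg_one (Subgroup.zpowers_le.2 hg_ker (h ▸ hK))
  have hcard_g : Nat.card (Subgroup.zpowers g) = 2 ^ n := by
    rw [Nat.card_zpowers, ← orderOf_units, hg, ZMod.orderOf_one_add_four_mul a ha]
  obtain ⟨k, hk, hcard_K⟩ := (Nat.dvd_prime_pow Nat.prime_two).1
    ((Subgroup.card_subgroup_dvd_card K).trans (ZMod.card_units_two_pow_add_one (n + 1)).dvd)
  have hnk : n ≤ k := by
    rw [← Nat.pow_dvd_pow_iff_le_right one_lt_two, ← hcard_g, ← hcard_K]
    exact Subgroup.card_dvd_of_le hlt.le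
  have hkn : k ≠ n := fun h => hlt.ne <|
    Subgroup.eq_of_le_of_card_ge hlt.le (by rw [hcard_K, hcard_g, h])
  rw [← Subgroup.card_eq_iff_eq_top, ZMod.card_units_two_pow_add_one, hcard_K]
  congr 1
  omega

/- The fibres of `ℤ_[p] → ℤ/p^n` are the balls of radius `p^(-n)`. -/
theorem PadicInt.dense_of_eventually_map_toZModPow_eq_top {p : ℕ} [Fact p.Prime]
    {H : Subgroup ℤ_[p]ˣ}
    (hH : ∀ᶠ n in atTop,
      H.map (Units.map ((toZModPow n : ℤ_[p] →+* ZMod (p ^ n)) : ℤ_[p] →* ZMod (p ^ n))) = ⊤) :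
    Dense (H : Set ℤ_[p]ˣ) := by
  intro u
  rw [Units.isOpenEmbedding_val.isEmbedding.closure_eq_preimage_closure_image, Set.mem_preimage,
    Metric.mem_closure_iff]
  intro ε hε
  have hsmall : ∀ᶠ n : ℕ in atTop, (p : ℝ) ^ (-(n : ℤ)) < ε := by
    have hp : 1 < (p : ℝ) := by exact_mod_cast (Fact.out : p.Prime).one_lt
    simpa [zpow_neg, zpow_natCast, inv_pow] using
      (tendsto_pow_atTop_nhds_zero_of_lt_one (inv_nonneg.2 (by positivity))
        (inv_lt_one_of_one_lt₀ hp)).eventually (gt_mem_nhds hε)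
  obtain ⟨n, hn, hnε⟩ := (hH.and hsmall).exists
  obtain ⟨h, hhH, hhu⟩ := Subgroup.mem_map.1 (hn ▸ Subgroup.mem_top (Units.map _ u))
  have hker : (h : ℤ_[p]) - u ∈ RingHom.ker (toZModPow n) := by
    rw [RingHom.mem_ker, map_sub, sub_eq_zero]
    exact congrArg Units.val hhu
  rw [ker_toZModPow, ← norm_le_pow_iff_mem_span_pow] at hker
  refine ⟨h, Set.mem_image_of_mem _ hhH, ?_⟩
  rw [dist_eq_norm, norm_sub_rev]
  exact hker.trans_lt hnε

theorem PadicInt.dense_closure_three_neg_one :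
    Dense (Subgroup.closure {u : ℤ_[2]ˣ | (u : ℤ_[2]) = 3 ∨ (u : ℤ_[2]) = -1} : Set ℤ_[2]ˣ) := by
  set H := Subgroup.closure {u : ℤ_[2]ˣ | (u : ℤ_[2]) = 3 ∨ (u : ℤ_[2]) = -1}
  have h3 : IsUnit (3 : ℤ_[2]) :=
    isUnit_iff.2 (by exact_mod_cast norm_natCast_eq_one_iff.2 (by norm_num : Nat.Coprime 2 3))
  have hneg_one : (-1 : ℤ_[2]ˣ) ∈ H := Subgroup.subset_closure (Or.inr Units.coe_neg_one)
  have hneg_three : -h3.unit ∈ H := by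
    rw [← neg_one_mul]
    exact H.mul_mem hneg_one (Subgroup.subset_closure (Or.inl h3.unit_spec))
  refine dense_of_eventually_map_toZModPow_eq_top (eventually_atTop.2 ⟨2, fun n hn => ?_⟩)
  obtain ⟨m, rfl⟩ := Nat.exists_eq_add_of_le' hn
  refine ZMod.subgroup_eq_top_of_neg_one_mem_of_one_add_four_mul_mem m
    (Units.map_neg_one (toZModPow (p := 2) (m + 2)) ▸ Subgroup.mem_map_of_mem _ hneg_one)
    (Subgroup.mem_map_of_mem _ hneg_three) (a := -1) (by decide) ?_
  simp only [Units.map_neg, Units.val_neg, Units.coe_map, IsUnit.unit_spec, MonoidHom.coe_coe,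
    map_ofNat, Int.cast_neg, Int.cast_one]
  ring

theorem F4.natCast_ne_zero_of_odd {n : ℕ} (hn : Odd n) : (n : F4) ≠ 0 := by
  rwa [Ne, CharP.cast_eq_zero_iff F4 2, ← even_iff_two_dvd, Nat.not_even_iff_odd]

theorem W4.ofNat_seven_ne_zero : (7 : W4) ≠ 0 := fun h => by
  have h7 := congrArg constantCoeff h
  rw [map_ofNat, map_zero] at h7
  exact F4.natCast_ne_zero_of_odd (n := 7) (by decide) (by exact_mod_cast h7)

theorem detW_ιW (a : W4) : detW (ιW a) = a * σW a := by
  simp [detW, ιW]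

theorem stmt_2_general (z : F4) (hz : z ^ 2 + z + 1 = 0)
    (s : W4) (hs0 : s ∈ Set.range (WittVector.map (algebraMap (ZMod 2) F4)))
    (hs : s ^ 2 = -7) :
    detW (ιW (1 + 2 * WittVector.teichmuller 2 z)) = 3 ∧
    (∀ α : W4, α * s = 1 - 2 * WittVector.teichmuller 2 z → detW (ιW α) = -1) ∧
    (Subgroup.closure {u : ℤ_[2]ˣ | (u : ℤ_[2]) = 3 ∨ (u : ℤ_[2]) = -1}).topologicalClosure
      = ⊤ := by
  have hζ : IsPrimitiveRoot (teichmuller 2 z) 3 :=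
    (isPrimitiveRoot_three_of_sq_add_add_one
      (by exact_mod_cast F4.natCast_ne_zero_of_odd (n := 3) (by decide)) hz).teichmuller
  set ζ := teichmuller 2 z
  have hcube : ζ ^ 3 = 1 := hζ.pow_eq_one
  have hsum : ζ ^ 2 + ζ + 1 = 0 := by
    have h := hζ.geom_sum_eq_zero (by norm_num)
    simp only [Finset.sum_range_succ, Finset.sum_range_zero] at h
    linear_combination h
  have hσζ : σW ζ = ζ ^ 2 := frobenius_teichmuller z
  refine ⟨?_, fun α hα => ?_, ?_⟩
  · rw [detW_ιW, map_add, map_one, map_mul, map_ofNat, hσζ]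
    linear_combination 2 * hsum + 4 * hcube
  · have hσs : σW s = s := by
      obtain ⟨t, rfl⟩ := hs0
      exact frobenius_map_zmod _ t
    have hσα : σW α * s = 1 - 2 * ζ ^ 2 := by
      rw [← hσs, ← map_mul, hα, map_sub, map_one, map_mul, map_ofNat, hσζ]
    rw [detW_ιW]
    refine mul_left_cancel₀ W4.ofNat_seven_ne_zero ?_
    linear_combination α * σW α * hs - σW α * s * hα - (1 - 2 * ζ) * hσα + 2 * hsum - 4 * hcube
  · rw [← SetLike.coe_set_eq, Subgroup.topologicalClosure_coe, Subgroup.coe_top,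
      ← dense_iff_closure_eq]
    exact dense_closure_three_neg_one

/-- Let `ζ ∈ W(F₄)` be the Teichmüller lift of a primitive cube root of
unity and `s = √(−7) ∈ ℤ₂ ⊆ W(F₄)` the square root of `−7` with `s ≡ 1 mod 4`.  Then
`π = 1 + 2ζ` and `α = (1 − 2ζ)/√(−7)` satisfy `|π| = 3` and `|α| = −1`.  In particular
(using that `ℤ₂ˣ` is topologically generated by `3` and `−1`) the determinant map to
`ℤ₂ˣ` is surjective when restricted to the subgroup generated by `π`, `α` and the units
of determinant `1`. -/
theorem stmt_2 (z : F4) (hz : z ^ 2 + z + 1 = 0)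
    (s : W4) (hs0 : s ∈ Set.range (WittVector.map (algebraMap (ZMod 2) F4)))
    (hs : s ^ 2 = -7) (hs1 : ∃ t : W4, s = 1 + 4 * t) :
    detW (ιW (1 + 2 * WittVector.teichmuller 2 z)) = 3 ∧
    (∀ α : W4, α * s = 1 - 2 * WittVector.teichmuller 2 z → detW (ιW α) = -1) ∧
    (Subgroup.closure {u : ℤ_[2]ˣ | (u : ℤ_[2]) = 3 ∨ (u : ℤ_[2]) = -1}).topologicalClosure
      = ⊤ :=
  stmt_2_general z hz s hs0 hs
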